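/- arXiv:2002.07296 — 4 statements merged into one kernel-verified Lean document; each statement's English description precedes it below -/
import Mathlib

section
/- Suppose a continuous trajectory x : [0,∞) → ℝ^d satisfies condition (PE2) for a set Ω ⊆ ℝ^d, and suppose in addition that the family of functions {t ↦ g(x(t)) : g ∈ H_Ω, ‖g‖_H = 1} is uniformly equicontinuous on [0,∞). Then x satisfies condition (PE1) for Ω. -/
/-!
An `L²`-mass of at least `γ` over a window of length `Δ` forces a point `s` of the window where
`|g(x(s))|` exceeds `c = √(γ / 2Δ)`. Equicontinuity, with a modulus `η` that does not depend on `g`,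
keeps `g(x(τ))` within `c / 2` of `g(x(s))` for `τ ∈ [s, s + η / 2]`, so on that interval it has
constant sign and its integral has absolute value at least `(η / 2) (c / 2)`.
-/

/-- The closed linear span `H_Ω` of the Riesz representers `k_p`, `p ∈ Ω`. -/
noncomputable def HOmega {d : ℕ} {H : Type} [NormedAddCommGroup H]
    [InnerProductSpace ℝ H]
    (k : EuclideanSpace ℝ (Fin d) → H) (Ω : Set (EuclideanSpace ℝ (Fin d))) : Set H :=
  closure ((Submodule.span ℝ (k '' Ω) : Submodule ℝ H) : Set H)

/-- Condition (PE1) with explicit constants `T₀, γ, δ, Δ`. -/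
def PE1Const {d : ℕ} {H : Type} [NormedAddCommGroup H] [InnerProductSpace ℝ H]
    (ι : H →ₗ[ℝ] (EuclideanSpace ℝ (Fin d) → ℝ)) (k : EuclideanSpace ℝ (Fin d) → H)
    (Ω : Set (EuclideanSpace ℝ (Fin d))) (x : ℝ → EuclideanSpace ℝ (Fin d))
    (T₀ γ δ Δ : ℝ) : Prop :=
  ∀ t : ℝ, T₀ ≤ t → ∀ g ∈ HOmega k Ω, ‖g‖ = 1 →
    ∃ s ∈ Set.Icc t (t + Δ), γ ≤ |∫ τ in s..(s + δ), ι g (x τ)|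

/-- Condition (PE2) with explicit constants `T₀, γ, Δ`. -/
def PE2Const {d : ℕ} {H : Type} [NormedAddCommGroup H] [InnerProductSpace ℝ H]
    (ι : H →ₗ[ℝ] (EuclideanSpace ℝ (Fin d) → ℝ)) (k : EuclideanSpace ℝ (Fin d) → H)
    (Ω : Set (EuclideanSpace ℝ (Fin d))) (x : ℝ → EuclideanSpace ℝ (Fin d))
    (T₀ γ Δ : ℝ) : Prop :=
  ∀ t : ℝ, T₀ ≤ t → ∀ g ∈ HOmega k Ω, ‖g‖ = 1 →
    γ ≤ ∫ τ in t..(t + Δ), (ι g (x τ)) ^ 2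

open Set intervalIntegral

theorem exists_mem_Icc_lt_of_mul_lt_intervalIntegral {f : ℝ → ℝ} {a b m : ℝ} (hab : a ≤ b)
    (hf : IntervalIntegrable f MeasureTheory.volume a b) (hm : (b - a) * m < ∫ τ in a..b, f τ) :
    ∃ s ∈ Icc a b, m < f s := by
  by_contra! hle
  have := integral_mono_on hab hf intervalIntegrable_const hle
  rw [integral_const, smul_eq_mul] at this
  linarith

theorem mul_abs_sub_le_abs_intervalIntegral {f : ℝ → ℝ} {a b r : ℝ} (hab : a ≤ b)
    (hf : IntervalIntegrable f MeasureTheory.volume a b)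
    (hr : ∀ τ ∈ Icc a b, |f τ - f a| ≤ r) :
    (b - a) * (|f a| - r) ≤ |∫ τ in a..b, f τ| := by
  have hsplit : ∫ τ in a..b, f τ = (b - a) * f a + ∫ τ in a..b, (f τ - f a) := by
    rw [integral_sub hf intervalIntegrable_const, integral_const, smul_eq_mul]
    ring
  have hdev : |∫ τ in a..b, (f τ - f a)| ≤ r * (b - a) := by
    simpa only [Real.norm_eq_abs, abs_of_nonneg (sub_nonneg.2 hab)] using
      norm_integral_le_of_norm_le_const (f := fun τ => f τ - f a) fun τ hτ =>
        hr τ (Ioc_subset_Icc_self (uIoc_of_le hab ▸ hτ))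
  have hconst : |(b - a) * f a| = (b - a) * |f a| := by
    rw [abs_mul, abs_of_nonneg (sub_nonneg.2 hab)]
  have htri := abs_sub ((b - a) * f a + ∫ τ in a..b, (f τ - f a)) (∫ τ in a..b, (f τ - f a))
  rw [add_sub_cancel_right, hconst, ← hsplit] at htri
  linarith

theorem exists_mem_Icc_mul_le_abs_intervalIntegral {f : ℝ → ℝ} {t Δ δ c : ℝ}
    (hf : ContinuousOn f (Ici t)) (hΔ : 0 ≤ Δ) (hδ : 0 ≤ δ) (hc : 0 ≤ c)
    (hmass : Δ * c ^ 2 < ∫ τ in t..(t + Δ), f τ ^ 2)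
    (hmod : ∀ s ∈ Icc t (t + Δ), ∀ τ ∈ Icc s (s + δ), |f τ - f s| ≤ c / 2) :
    ∃ s ∈ Icc t (t + Δ), δ * (c / 2) ≤ |∫ τ in s..(s + δ), f τ| := by
  have hcont : ∀ a b, t ≤ a → ContinuousOn f (Icc a b) :=
    fun a b ha => hf.mono fun τ hτ => ha.trans hτ.1
  obtain ⟨s, hs, hcs⟩ := exists_mem_Icc_lt_of_mul_lt_intervalIntegral (by linarith)
    ((hcont t (t + Δ) le_rfl).pow 2 |>.intervalIntegrable_of_Icc (by linarith))
    (by rwa [add_sub_cancel_left])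
  rw [Pi.pow_apply, sq_lt_sq, abs_of_nonneg hc] at hcs
  refine ⟨s, hs, ?_⟩
  calc δ * (c / 2) ≤ (s + δ - s) * (|f s| - c / 2) := by
        rw [add_sub_cancel_left]; gcongr; linarith
    _ ≤ |∫ τ in s..(s + δ), f τ| := mul_abs_sub_le_abs_intervalIntegral (by linarith)
        ((hcont s (s + δ) hs.1).intervalIntegrable_of_Icc (by linarith)) (hmod s hs)

theorem pe2_implies_pe1_of_equicontinuous_general
    {d : ℕ} {H : Type} [NormedAddCommGroup H] [InnerProductSpace ℝ H]
    (ι : H →ₗ[ℝ] (EuclideanSpace ℝ (Fin d) → ℝ))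
    (k : EuclideanSpace ℝ (Fin d) → H)
    (Ω : Set (EuclideanSpace ℝ (Fin d)))
    (x : ℝ → EuclideanSpace ℝ (Fin d))
    (hPE2 : ∃ T₀ γ Δ : ℝ, 0 < T₀ ∧ 0 < γ ∧ 0 < Δ ∧ PE2Const ι k Ω x T₀ γ Δ)
    (hequi : ∀ ε : ℝ, 0 < ε → ∃ η : ℝ, 0 < η ∧
      ∀ g ∈ HOmega k Ω, ‖g‖ = 1 → ∀ s t : ℝ, 0 ≤ s → 0 ≤ t → |s - t| < η →
        |ι g (x s) - ι g (x t)| < ε) :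
    ∃ T₀ γ δ Δ : ℝ, 0 < T₀ ∧ 0 < γ ∧ 0 < δ ∧ 0 < Δ ∧ PE1Const ι k Ω x T₀ γ δ Δ := by
  obtain ⟨T₀, γ, Δ, hT₀, hγ, hΔ, hPE⟩ := hPE2
  set c := √(γ / (2 * Δ))
  have hc : 0 < c := Real.sqrt_pos.2 (by positivity)
  obtain ⟨η, hη, hmod⟩ := hequi (c / 2) (by positivity)
  refine ⟨T₀, η / 2 * (c / 2), η / 2, Δ, hT₀, by positivity, by positivity, hΔ, ?_⟩
  intro t ht g hg hg1
  have ht0 : 0 ≤ t := hT₀.le.trans ht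
  have hf : ContinuousOn (fun τ => ι g (x τ)) (Ici 0) :=
    (Metric.uniformContinuousOn_iff.2 fun ε hε => by
      obtain ⟨η', hη', h⟩ := hequi ε hε
      exact ⟨η', hη', fun s hs t ht hst => h g hg hg1 s t hs ht hst⟩).continuousOn
  have hnear : ∀ s ∈ Icc t (t + Δ), ∀ τ ∈ Icc s (s + η / 2),
      |ι g (x τ) - ι g (x s)| ≤ c / 2 := fun s hs τ hτ =>
    (hmod g hg hg1 τ s (by linarith [hs.1, hτ.1]) (by linarith [hs.1])
      (by rw [abs_lt]; constructor <;> linarith [hτ.1, hτ.2])).le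
  refine exists_mem_Icc_mul_le_abs_intervalIntegral (hf.mono (Ici_subset_Ici.2 ht0)) hΔ.le
    (by positivity) hc.le ?_ hnear
  calc Δ * c ^ 2 = γ / 2 := by rw [Real.sq_sqrt (by positivity)]; field_simp
    _ < γ := half_lt_self hγ
    _ ≤ _ := hPE t ht g hg hg1

/-- if a continuous trajectory satisfies (PE2) for `Ω` and the family
`{t ↦ g(x(t)) : g ∈ H_Ω, ‖g‖ = 1}` is uniformly equicontinuous on `[0,∞)`,
then the trajectory satisfies (PE1) for `Ω`. -/
theorem pe2_implies_pe1_of_equicontinuous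
    {d : ℕ} {H : Type} [NormedAddCommGroup H] [InnerProductSpace ℝ H] [CompleteSpace H]
    (ι : H →ₗ[ℝ] (EuclideanSpace ℝ (Fin d) → ℝ))
    (k : EuclideanSpace ℝ (Fin d) → H)
    (hk : ∀ p : EuclideanSpace ℝ (Fin d), ∀ g : H, (inner ℝ (k p) g : ℝ) = ι g p)
    (Ω : Set (EuclideanSpace ℝ (Fin d)))
    (x : ℝ → EuclideanSpace ℝ (Fin d)) (hx : ContinuousOn x (Set.Ici 0))
    (hPE2 : ∃ T₀ γ Δ : ℝ, 0 < T₀ ∧ 0 < γ ∧ 0 < Δ ∧ PE2Const ι k Ω x T₀ γ Δ)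
    (hequi : ∀ ε : ℝ, 0 < ε → ∃ η : ℝ, 0 < η ∧
      ∀ g ∈ HOmega k Ω, ‖g‖ = 1 → ∀ s t : ℝ, 0 ≤ s → 0 ≤ t → |s - t| < η →
        |ι g (x s) - ι g (x t)| < ε) :
    ∃ T₀ γ δ Δ : ℝ, 0 < T₀ ∧ 0 < γ ∧ 0 < δ ∧ 0 < Δ ∧ PE1Const ι k Ω x T₀ γ δ Δ :=
  pe2_implies_pe1_of_equicontinuous_general ι k Ω x hPE2 hequi
end

section
/- Let T > 0, let x : [0,T] → Ω and u : [0,T] → ℝ be continuous. Let (Hₙ)_{n∈ℕ} be an increasing sequence of finite-dimensional subspaces of H whose union is dense in H, and let Πₙ denote the orthogonal projection of H onto Hₙ. Let (x̂, f̂) : [0,T] → ℝ^d × H be the solution of the estimator equations x̂'(t) = A x̂(t) + B u(t) + (E_{x(t)} f̂(t)) B_N, f̂'(t) = Γ⁻¹ (B_N E_{x(t)})* P (x(t) − x̂(t)) with initial data (x̂₀, f̂₀), and for each n let (x̂ₙ, f̂ₙ) : [0,T] → ℝ^d × Hₙ be the solution of the approximate equations x̂ₙ'(t) = A x̂ₙ(t)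 + B u(t) + (E_{x(t)} f̂ₙ(t)) B_N, f̂ₙ'(t) = Πₙ Γ⁻¹ (B_N E_{x(t)})* P (x(t) − x̂ₙ(t)) with x̂ₙ(0) = x̂₀ and f̂ₙ(0) = Πₙ f̂₀. Then sup_{t∈[0,T]} ‖x̂(t) − x̂ₙ(t)‖ → 0 and sup_{t∈[0,T]} ‖f̂(t) − f̂ₙ(t)‖_H → 0 as n → ∞. -/
/-!
The error `(x̂ - x̂ₙ, Πₙ (f̂ - f̂ₙ))` starts at `0` and satisfies a linear differential
inequality whose only forcing term is the projection residual `f̂ - Πₙ f̂`, entering through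
`E_{x(t)}`, which is bounded by `C`. Grönwall's inequality bounds both errors on `[0, T]` by a
constant multiple of `sup_t ‖f̂ t - Πₙ f̂ t‖`, and this supremum tends to `0` by Dini's theorem:
the residual norms decrease in `n` because the `Hₙ` increase, and tend to `0` pointwise because
their union is dense.
-/

open Set Filter
open scoped RealInnerProductSpace

namespace Submodule

variable {𝕜 E : Type*} [RCLike 𝕜] [NormedAddCommGroup E] [InnerProductSpace 𝕜 E]

theorem norm_sub_starProjection_le_norm_sub {U : Submodule 𝕜 E} [U.HasOrthogonalProjection]
    (y : E) {z : E} (hz : z ∈ U) : ‖y - U.starProjection y‖ ≤ ‖y - z‖ := by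
  rw [starProjection_minimal]
  exact ciInf_le ⟨0, forall_mem_range.mpr fun _ => norm_nonneg _⟩ (⟨z, hz⟩ : U)

theorem norm_sub_starProjection_le_of_le {U V : Submodule 𝕜 E} [U.HasOrthogonalProjection]
    [V.HasOrthogonalProjection] (hUV : U ≤ V) (y : E) :
    ‖y - V.starProjection y‖ ≤ ‖y - U.starProjection y‖ :=
  norm_sub_starProjection_le_norm_sub y (hUV (U.starProjection_apply_mem y))

theorem sub_starProjection_sub_of_mem {U : Submodule 𝕜 E} [U.HasOrthogonalProjection]
    (y : E) {z : E} (hz : z ∈ U) :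
    y - z - U.starProjection (y - z) = y - U.starProjection y := by
  rw [map_sub, starProjection_eq_self_iff.mpr hz]
  abel

theorem top_le_topologicalClosure_iSup_of_dense {ι : Type*} {U : ι → Submodule 𝕜 E}
    (h : Dense (⋃ i, (U i : Set E))) : ⊤ ≤ (⨆ i, U i).topologicalClosure := by
  intro y _
  rw [← SetLike.mem_coe, topologicalClosure_coe]
  exact closure_mono (iUnion_subset fun i => SetLike.coe_subset_coe.mpr (le_iSup U i)) (h y)

theorem tendstoUniformlyOn_norm_sub_starProjection {ι α : Type*} [Preorder ι]
    [TopologicalSpace α] {U : ι → Submodule 𝕜 E} [∀ i, (U i).HasOrthogonalProjection]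
    (hU : Monotone U) (hdense : ⊤ ≤ (⨆ i, U i).topologicalClosure) {f : α → E} {s : Set α}
    (hs : IsCompact s) (hf : ContinuousOn f s) :
    TendstoUniformlyOn (fun i t => ‖f t - (U i).starProjection (f t)‖) 0 atTop s := by
  refine Antitone.tendstoUniformlyOn_of_forall_tendsto hs (fun i => ?_)
    (fun t _ i j hij => norm_sub_starProjection_le_of_le (hU hij) (f t)) continuousOn_const
    (fun t _ => ?_)
  · exact (hf.sub ((U i).starProjection.continuous.comp_continuousOn hf)).norm
  · simpa using ((starProjection_tendsto_self U hU (f t) hdense).const_sub (f t)).norm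

end Submodule

theorem norm_le_of_inner_self_le {E : Type*} [NormedAddCommGroup E] [InnerProductSpace ℝ E]
    {v : E} {C : ℝ} (hC : 0 ≤ C) (h : ⟪v, v⟫ ≤ C * ‖v‖) : ‖v‖ ≤ C := by
  rw [real_inner_self_eq_norm_sq] at h
  nlinarith [norm_nonneg v]

theorem TendstoUniformlyOn.of_norm_sub_le_mul {ι α E : Type*} [SeminormedAddCommGroup E]
    {l : Filter ι} {s : Set α} {F : ι → α → E} {f : α → E} {g : ι → α → ℝ} (M : ℝ)
    (hg : TendstoUniformlyOn g 0 l s)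
    (h : ∀ i δ, (∀ t ∈ s, g i t ≤ δ) → ∀ t ∈ s, ‖f t - F i t‖ ≤ M * δ) :
    TendstoUniformlyOn F f l s := by
  rw [Metric.tendstoUniformlyOn_iff] at hg ⊢
  intro ε hε
  have hδ : 0 < ε / (|M| + 1) := by positivity
  filter_upwards [hg _ hδ] with i hi t ht
  have hg_le : ∀ t ∈ s, g i t ≤ ε / (|M| + 1) := fun t ht =>
    (le_abs_self _).trans (by simpa using (hi t ht).le)
  calc dist (f t) (F i t) = ‖f t - F i t‖ := dist_eq_norm _ _
    _ ≤ M * (ε / (|M| + 1)) := h i _ hg_le t ht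
    _ ≤ |M| * (ε / (|M| + 1)) := by gcongr; exact le_abs_self M
    _ < (|M| + 1) * (ε / (|M| + 1)) := by gcongr; linarith
    _ = ε := by field_simp

theorem gronwallBound_δ0_eq_mul (K ε x : ℝ) :
    gronwallBound 0 K ε x = ε * gronwallBound 0 K 1 x := by
  by_cases hK : K = 0
  · simp [gronwallBound_K0, hK]
  · simp only [gronwallBound_of_K_ne_0 hK]
    ring

theorem norm_le_mul_gronwallBound_of_norm_deriv_le {E : Type*} [NormedAddCommGroup E]
    [NormedSpace ℝ E] {f f' : ℝ → E} {K ε a b : ℝ} (hK : 0 ≤ K) (hε : 0 ≤ ε)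
    (hf : ∀ t ∈ Icc a b, HasDerivWithinAt f (f' t) (Icc a b) t) (ha : f a = 0)
    (bound : ∀ t ∈ Ico a b, ‖f' t‖ ≤ K * ‖f t‖ + ε) {t : ℝ} (ht : t ∈ Icc a b) :
    ‖f t‖ ≤ ε * gronwallBound 0 K 1 (b - a) := by
  have hcont : ContinuousOn f (Icc a b) := fun t ht => (hf t ht).continuousWithinAt
  have hright : ∀ t ∈ Ico a b, HasDerivWithinAt f (f' t) (Ici t) t := fun t ht =>
    (hf t (Ico_subset_Icc_self ht)).mono_of_mem_nhdsWithin (Icc_mem_nhdsGE_of_mem ht)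
  calc ‖f t‖ ≤ gronwallBound 0 K ε (t - a) :=
        norm_le_gronwallBound_of_norm_deriv_right_le hcont hright (by simp [ha]) bound t ht
    _ ≤ gronwallBound 0 K ε (b - a) := gronwallBound_mono le_rfl hε hK (by linarith [ht.2])
    _ = ε * gronwallBound 0 K 1 (b - a) := gronwallBound_δ0_eq_mul K ε (b - a)

section EstimatorError

variable {E H : Type*} [NormedAddCommGroup E] [InnerProductSpace ℝ E]
  [NormedAddCommGroup H] [InnerProductSpace ℝ H]
  (A P : E →L[ℝ] E) (B_N : E) (γ : ℝ) (U : Submodule ℝ H) [U.HasOrthogonalProjection]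

/-- Right-hand side of the equation for `(x̂ - x̂ₙ, Πₙ (f̂ - f̂ₙ))`, in terms of
`e = x̂ - x̂ₙ`, `r = f̂ - f̂ₙ` and the kernel section `κ = k_{x(t)}`. -/
noncomputable def errorField (κ : H) (e : E) (r : H) : E × H :=
  (A e + ⟪κ, r⟫ • B_N, -U.starProjection (γ • ⟪B_N, P e⟫ • κ))

noncomputable def errorLipschitzConst (C : ℝ) : ℝ := ‖A‖ + C * ‖B_N‖ + |γ| * ‖B_N‖ * ‖P‖ * C

variable {A P B_N γ U}

theorem norm_errorField_le {C δ : ℝ} {κ r : H} (e : E) (hC : 0 ≤ C) (hκ : ‖κ‖ ≤ C)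
    (hr : ‖r - U.starProjection r‖ ≤ δ) :
    ‖errorField A P B_N γ U κ e r‖ ≤
      errorLipschitzConst A P B_N γ C * ‖(e, U.starProjection r)‖ + C * ‖B_N‖ * δ := by
  set n := ‖(e, U.starProjection r)‖
  have he : ‖e‖ ≤ n := norm_fst_le (e, U.starProjection r)
  have hq : ‖U.starProjection r‖ ≤ n := norm_snd_le (e, U.starProjection r)
  have hκr : |⟪κ, r⟫| ≤ C * (n + δ) := calc
    |⟪κ, r⟫| ≤ ‖κ‖ * ‖U.starProjection r + (r - U.starProjection r)‖ := by
      rw [add_sub_cancel]; exact abs_real_inner_le_norm κ r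
    _ ≤ C * (n + δ) := by gcongr; exact (norm_add_le _ _).trans (add_le_add hq hr)
  have hPe : |⟪B_N, P e⟫| ≤ ‖B_N‖ * (‖P‖ * n) := calc
    |⟪B_N, P e⟫| ≤ ‖B_N‖ * ‖P e‖ := abs_real_inner_le_norm _ _
    _ ≤ ‖B_N‖ * (‖P‖ * n) := by gcongr; exact (P.le_opNorm e).trans (by gcongr)
  have hn : 0 ≤ n := norm_nonneg _
  have hδ : 0 ≤ δ := (norm_nonneg _).trans hr
  have hAn : 0 ≤ ‖A‖ * n := by positivity
  have hBn : 0 ≤ C * ‖B_N‖ * n := by positivity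
  have hBδ : 0 ≤ C * ‖B_N‖ * δ := by positivity
  have hγn : 0 ≤ |γ| * ‖B_N‖ * ‖P‖ * C * n := by positivity
  rw [errorField, Prod.norm_def, errorLipschitzConst]
  refine max_le ?_ ?_
  · calc ‖A e + ⟪κ, r⟫ • B_N‖ ≤ ‖A‖ * n + C * (n + δ) * ‖B_N‖ := by
          refine (norm_add_le _ _).trans (add_le_add ?_ ?_)
          · exact (A.le_opNorm e).trans (by gcongr)
          · rw [norm_smul, Real.norm_eq_abs]; gcongr
      _ ≤ _ := by linarith
  · calc ‖-U.starProjection (γ • ⟪B_N, P e⟫ • κ)‖ ≤ |γ| * (‖B_N‖ * (‖P‖ * n) * C) := by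
          rw [norm_neg]
          refine (U.norm_starProjection_apply_le _).trans ?_
          rw [norm_smul, norm_smul, Real.norm_eq_abs, Real.norm_eq_abs]
          gcongr
      _ ≤ _ := by linarith

variable {B : E} {x xhat xhatn : ℝ → E} {u : ℝ → ℝ} {κ : ℝ → H} {fhat fhatn : ℝ → H}

theorem hasDerivWithinAt_projected_error {s : Set ℝ} {t : ℝ}
    (hxhat : HasDerivWithinAt xhat (A (xhat t) + u t • B + ⟪κ t, fhat t⟫ • B_N) s t)
    (hfhat : HasDerivWithinAt fhat (γ • ⟪B_N, P (x t - xhat t)⟫ • κ t) s t)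
    (hxhatn : HasDerivWithinAt xhatn (A (xhatn t) + u t • B + ⟪κ t, fhatn t⟫ • B_N) s t)
    (hfhatn : HasDerivWithinAt fhatn
      (U.starProjection (γ • ⟪B_N, P (x t - xhatn t)⟫ • κ t)) s t) :
    HasDerivWithinAt (fun t => (xhat t - xhatn t, U.starProjection (fhat t - fhatn t)))
      (errorField A P B_N γ U (κ t) (xhat t - xhatn t) (fhat t - fhatn t)) s t := by
  have h := (hxhat.sub hxhatn).prodMk
    (U.starProjection.hasFDerivAt.comp_hasDerivWithinAt t (hfhat.sub hfhatn))
  refine h.congr_deriv (Prod.ext ?_ ?_)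
  · simp only [errorField, map_sub, inner_sub_right, sub_smul]
    abel
  · simp only [errorField]
    rw [map_sub, Submodule.starProjection_eq_self_iff.mpr (U.starProjection_apply_mem _),
      ← map_sub, ← map_neg]
    congr 1
    simp only [map_sub, inner_sub_right, sub_smul, smul_sub]
    abel

theorem norm_estimator_error_le {C T δ : ℝ} (hC : 0 ≤ C) (hκ : ∀ t ∈ Icc 0 T, ‖κ t‖ ≤ C)
    (hsol : ∀ t ∈ Icc 0 T,
      HasDerivWithinAt xhat (A (xhat t) + u t • B + ⟪κ t, fhat t⟫ • B_N) (Icc 0 T) t ∧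
      HasDerivWithinAt fhat (γ • ⟪B_N, P (x t - xhat t)⟫ • κ t) (Icc 0 T) t)
    (hsoln : ∀ t ∈ Icc 0 T,
      HasDerivWithinAt xhatn (A (xhatn t) + u t • B + ⟪κ t, fhatn t⟫ • B_N) (Icc 0 T) t ∧
      HasDerivWithinAt fhatn (U.starProjection (γ • ⟪B_N, P (x t - xhatn t)⟫ • κ t))
        (Icc 0 T) t)
    (hx0 : xhat 0 = xhatn 0) (hf0 : fhatn 0 = U.starProjection (fhat 0))
    (hmem : ∀ t ∈ Icc 0 T, fhatn t ∈ U)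
    (hδ : ∀ t ∈ Icc 0 T, ‖fhat t - U.starProjection (fhat t)‖ ≤ δ) {t : ℝ} (ht : t ∈ Icc 0 T) :
    let M := C * ‖B_N‖ * gronwallBound 0 (errorLipschitzConst A P B_N γ C) 1 T
    ‖xhat t - xhatn t‖ ≤ M * δ ∧ ‖fhat t - fhatn t‖ ≤ (M + 1) * δ := by
  intro M
  set err := fun t => (xhat t - xhatn t, U.starProjection (fhat t - fhatn t))
  have hδ0 : 0 ≤ δ := (norm_nonneg _).trans (hδ t ht)
  have hresid : ∀ t ∈ Icc 0 T,
      fhat t - fhatn t - U.starProjection (fhat t - fhatn t) = fhat t - U.starProjection (fhat t) :=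
    fun t ht => U.sub_starProjection_sub_of_mem _ (hmem t ht)
  have herr : ‖err t‖ ≤ M * δ := by
    refine (norm_le_mul_gronwallBound_of_norm_deriv_le (K := errorLipschitzConst A P B_N γ C)
      (ε := C * ‖B_N‖ * δ) (by unfold errorLipschitzConst; positivity) (by positivity)
      (fun t ht => hasDerivWithinAt_projected_error (hsol t ht).1 (hsol t ht).2
        (hsoln t ht).1 (hsoln t ht).2) ?_ (fun t ht => ?_) ht).trans_eq ?_
    · simp [hx0, hf0, Submodule.starProjection_eq_self_iff.mpr (U.starProjection_apply_mem _)]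
    · exact norm_errorField_le _ hC (hκ t (Ico_subset_Icc_self ht))
        ((hresid t (Ico_subset_Icc_self ht)).symm ▸ hδ t (Ico_subset_Icc_self ht))
    · simp only [M, sub_zero]; ring
  refine ⟨(norm_fst_le (err t)).trans herr, ?_⟩
  calc ‖fhat t - fhatn t‖
      = ‖U.starProjection (fhat t - fhatn t) + (fhat t - U.starProjection (fhat t))‖ := by
        rw [← hresid t ht, add_sub_cancel]
    _ ≤ M * δ + δ :=
        (norm_add_le _ _).trans (add_le_add ((norm_snd_le (err t)).trans herr) (hδ t ht))
    _ = (M + 1) * δ := by ring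

end EstimatorError

theorem finite_dimensional_approximation_converges_general
    {d : ℕ} (Ω : Set (EuclideanSpace ℝ (Fin d)))
    {H : Type} [NormedAddCommGroup H] [InnerProductSpace ℝ H]
    (ι : H →ₗ[ℝ] (EuclideanSpace ℝ (Fin d) → ℝ))
    (C : ℝ) (hC : 0 < C)
    (hbound : ∀ f : H, ∀ ω ∈ Ω, |ι f ω| ≤ C * ‖f‖)
    (k : EuclideanSpace ℝ (Fin d) → H)
    (hk : ∀ ω ∈ Ω, ∀ f : H, (inner ℝ (k ω) f : ℝ) = ι f ω)
    (A P : Matrix (Fin d) (Fin d) ℝ) (B B_N : EuclideanSpace ℝ (Fin d))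
    (Γ : ℝ) (T : ℝ)
    (x : ℝ → EuclideanSpace ℝ (Fin d))
    (hxΩ : ∀ t ∈ Icc (0 : ℝ) T, x t ∈ Ω)
    (u : ℝ → ℝ)
    (Hn : ℕ → Submodule ℝ H) [∀ m, FiniteDimensional ℝ (Hn m)]
    (hmono : Monotone Hn)
    (hdense : Dense (⋃ m, (Hn m : Set H)))
    (xhat0 : EuclideanSpace ℝ (Fin d)) (fhat0 : H)
    (xhat : ℝ → EuclideanSpace ℝ (Fin d)) (fhat : ℝ → H)
    (hinit : xhat 0 = xhat0 ∧ fhat 0 = fhat0)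
    (hsol : ∀ t ∈ Icc (0 : ℝ) T,
      HasDerivWithinAt xhat
        ((Matrix.toEuclideanLin A) (xhat t) + u t • B + (ι (fhat t) (x t)) • B_N)
        (Icc 0 T) t ∧
      HasDerivWithinAt fhat
        (Γ⁻¹ • ((inner ℝ B_N ((Matrix.toEuclideanLin P) (x t - xhat t)) : ℝ) • k (x t)))
        (Icc 0 T) t)
    (xhatn : ℕ → ℝ → EuclideanSpace ℝ (Fin d)) (fhatn : ℕ → ℝ → H)
    (hinitn : ∀ m : ℕ, xhatn m 0 = xhat0 ∧
      fhatn m 0 = ((Hn m).orthogonalProjection fhat0 : H))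
    (hmemn : ∀ m : ℕ, ∀ t ∈ Icc (0 : ℝ) T, fhatn m t ∈ Hn m)
    (hsoln : ∀ m : ℕ, ∀ t ∈ Icc (0 : ℝ) T,
      HasDerivWithinAt (xhatn m)
        ((Matrix.toEuclideanLin A) (xhatn m t) + u t • B + (ι (fhatn m t) (x t)) • B_N)
        (Icc 0 T) t ∧
      HasDerivWithinAt (fhatn m)
        (((Hn m).orthogonalProjection
          (Γ⁻¹ • ((inner ℝ B_N ((Matrix.toEuclideanLin P) (x t - xhatn m t)) : ℝ) •
            k (x t))) : H))
        (Icc 0 T) t) :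
    TendstoUniformlyOn (fun m t => xhatn m t) xhat atTop (Icc 0 T) ∧
    TendstoUniformlyOn (fun m t => fhatn m t) fhat atTop (Icc 0 T) := by
  have hκ : ∀ t ∈ Icc (0 : ℝ) T, ‖k (x t)‖ ≤ C := fun t ht =>
    norm_le_of_inner_self_le hC.le <| by
      rw [hk _ (hxΩ t ht)]
      exact (le_abs_self _).trans (hbound _ _ (hxΩ t ht))
  have hproj := Submodule.tendstoUniformlyOn_norm_sub_starProjection hmono
    (Submodule.top_le_topologicalClosure_iSup_of_dense hdense) isCompact_Icc
    (fun t ht => (hsol t ht).2.continuousWithinAt)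
  have herr := fun m δ
      (hδ : ∀ t ∈ Icc (0 : ℝ) T, ‖fhat t - (Hn m).starProjection (fhat t)‖ ≤ δ) t
      (ht : t ∈ Icc (0 : ℝ) T) =>
    norm_estimator_error_le (A := (Matrix.toEuclideanLin A).toContinuousLinearMap)
      (P := (Matrix.toEuclideanLin P).toContinuousLinearMap) (γ := Γ⁻¹) hC.le hκ
      (fun t ht => by rw [hk _ (hxΩ t ht)]; exact hsol t ht)
      (fun t ht => by rw [hk _ (hxΩ t ht)]; exact hsoln m t ht)
      (hinit.1.trans (hinitn m).1.symm) (by rw [(hinitn m).2, hinit.2]; rfl) (hmemn m) hδ ht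
  exact ⟨hproj.of_norm_sub_le_mul _ fun m δ hδ t ht => (herr m δ hδ t ht).1,
    hproj.of_norm_sub_le_mul _ fun m δ hδ t ht => (herr m δ hδ t ht).2⟩

/-- the solutions of the finite-dimensional approximate estimator
equations, obtained by projecting the learning law onto an increasing dense family
of finite-dimensional subspaces `Hₙ`, converge uniformly on `[0,T]` to the solution
of the full estimator equations. -/
theorem finite_dimensional_approximation_converges
    {d : ℕ} (Ω : Set (EuclideanSpace ℝ (Fin d)))
    {H : Type} [NormedAddCommGroup H] [InnerProductSpace ℝ H] [CompleteSpace H]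
    (ι : H →ₗ[ℝ] (EuclideanSpace ℝ (Fin d) → ℝ))
    (C : ℝ) (hC : 0 < C)
    (hbound : ∀ f : H, ∀ ω ∈ Ω, |ι f ω| ≤ C * ‖f‖)
    (k : EuclideanSpace ℝ (Fin d) → H)
    (hk : ∀ ω ∈ Ω, ∀ f : H, (inner ℝ (k ω) f : ℝ) = ι f ω)
    (A P : Matrix (Fin d) (Fin d) ℝ) (B B_N : EuclideanSpace ℝ (Fin d))
    (Γ : ℝ) (hΓ : 0 < Γ) (T : ℝ) (hT : 0 < T)
    (x : ℝ → EuclideanSpace ℝ (Fin d)) (hx : ContinuousOn x (Icc 0 T))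
    (hxΩ : ∀ t ∈ Icc (0 : ℝ) T, x t ∈ Ω)
    (u : ℝ → ℝ) (hu : ContinuousOn u (Icc 0 T))
    (Hn : ℕ → Submodule ℝ H) [∀ m, FiniteDimensional ℝ (Hn m)]
    (hmono : Monotone Hn)
    (hdense : Dense (⋃ m, (Hn m : Set H)))
    (xhat0 : EuclideanSpace ℝ (Fin d)) (fhat0 : H)
    (xhat : ℝ → EuclideanSpace ℝ (Fin d)) (fhat : ℝ → H)
    (hinit : xhat 0 = xhat0 ∧ fhat 0 = fhat0)
    (hsol : ∀ t ∈ Icc (0 : ℝ) T,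
      HasDerivWithinAt xhat
        ((Matrix.toEuclideanLin A) (xhat t) + u t • B + (ι (fhat t) (x t)) • B_N)
        (Icc 0 T) t ∧
      HasDerivWithinAt fhat
        (Γ⁻¹ • ((inner ℝ B_N ((Matrix.toEuclideanLin P) (x t - xhat t)) : ℝ) • k (x t)))
        (Icc 0 T) t)
    (xhatn : ℕ → ℝ → EuclideanSpace ℝ (Fin d)) (fhatn : ℕ → ℝ → H)
    (hinitn : ∀ m : ℕ, xhatn m 0 = xhat0 ∧
      fhatn m 0 = ((Hn m).orthogonalProjection fhat0 : H))
    (hmemn : ∀ m : ℕ, ∀ t ∈ Icc (0 : ℝ) T, fhatn m t ∈ Hn m)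
    (hsoln : ∀ m : ℕ, ∀ t ∈ Icc (0 : ℝ) T,
      HasDerivWithinAt (xhatn m)
        ((Matrix.toEuclideanLin A) (xhatn m t) + u t • B + (ι (fhatn m t) (x t)) • B_N)
        (Icc 0 T) t ∧
      HasDerivWithinAt (fhatn m)
        (((Hn m).orthogonalProjection
          (Γ⁻¹ • ((inner ℝ B_N ((Matrix.toEuclideanLin P) (x t - xhatn m t)) : ℝ) •
            k (x t))) : H))
        (Icc 0 T) t) :
    TendstoUniformlyOn (fun m t => xhatn m t) xhat atTop (Icc 0 T) ∧
    TendstoUniformlyOn (fun m t => fhatn m t) fhat atTop (Icc 0 T) :=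
  finite_dimensional_approximation_converges_general Ω ι C hC hbound k hk A P B B_N Γ T x hxΩ u Hn
    hmono hdense xhat0 fhat0 xhat fhat hinit hsol xhatn fhatn hinitn hmemn hsoln
end

section
/- For every σ > 0, every positive integer n and all pairwise distinct points x₁,…,xₙ ∈ ℝ^d, the n×n real matrix 𝕂 with entries 𝕂_{ij} = exp(−‖x_i − x_j‖²/(2σ²)) is symmetric and positive definite. -/
/-!
The Gaussian kernel is, up to a positive constant, the `L²` inner product of two Gaussian bumps of
twice the rate: `∫ exp (-2b‖u - x‖²) exp (-2b‖u - y‖²) du ∝ exp (-b‖x - y‖²)`, by the parallelogram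
law around the midpoint of `x` and `y`. Hence `cᵀ K c` is a positive multiple of
`∫ (∑ cᵢ exp (-2b‖u - xᵢ‖²))² du`, which vanishes only if the combination of bumps does. After
factoring out `exp (-2b‖u‖²)` the bumps become the characters `u ↦ exp ⟪4b xᵢ, u⟫`, pairwise distinct
for distinct points, so Dedekind's lemma on independence of characters forces `c = 0`.
-/

open MeasureTheory Real
open scoped InnerProductSpace Matrix

lemma Finset.sq_sum_mul {ι R : Type*} [CommSemiring R] (s : Finset ι) (c f : ι → R) :
    (∑ i ∈ s, c i * f i) ^ 2 = ∑ i ∈ s, ∑ j ∈ s, c i * c j * (f i * f j) := by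
  rw [sq, Finset.sum_mul_sum]
  exact Finset.sum_congr rfl fun i _ => Finset.sum_congr rfl fun j _ => by ring

noncomputable section

section

variable {V : Type*} [NormedAddCommGroup V]

def gaussianBump (a : ℝ) (x u : V) : ℝ := rexp (-a * ‖u - x‖ ^ 2)

@[fun_prop]
lemma continuous_gaussianBump (a : ℝ) (x : V) : Continuous (gaussianBump a x) := by
  unfold gaussianBump
  fun_prop

def gaussianGram {ι : Type*} (b : ℝ) (x : ι → V) : Matrix ι ι ℝ :=
  Matrix.of fun i j => rexp (-b * ‖x i - x j‖ ^ 2)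

lemma gaussianGram_isSymm {ι : Type*} (b : ℝ) (x : ι → V) : (gaussianGram b x).IsSymm :=
  Matrix.IsSymm.ext fun i j => by simp only [gaussianGram, Matrix.of_apply, norm_sub_rev]

variable [InnerProductSpace ℝ V]

lemma norm_sub_sq_add_norm_sub_sq (x y u : V) :
    ‖u - x‖ ^ 2 + ‖u - y‖ ^ 2 = 2 * ‖u - midpoint ℝ x y‖ ^ 2 + ‖x - y‖ ^ 2 / 2 := by
  have h := parallelogram_law_with_norm ℝ (u - x) (u - y)
  rw [show u - x + (u - y) = (2 : ℝ) • (u - midpoint ℝ x y) by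
      rw [midpoint_eq_smul_add, invOf_eq_inv]; module,
    show u - x - (u - y) = y - x by abel, norm_smul, norm_sub_rev y x] at h
  norm_num at h
  linarith

lemma gaussianBump_mul_gaussianBump (b : ℝ) (x y u : V) :
    gaussianBump (2 * b) x u * gaussianBump (2 * b) y u =
      rexp (-b * ‖x - y‖ ^ 2) * gaussianBump (4 * b) (midpoint ℝ x y) u := by
  simp only [gaussianBump, ← Real.exp_add]
  congr 1
  linear_combination (-2 * b) * norm_sub_sq_add_norm_sub_sq x y u

lemma gaussianBump_eq_mul_exp_inner (a : ℝ) (x u : V) :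
    gaussianBump a x u =
      rexp (-a * ‖u‖ ^ 2) * (rexp (-a * ‖x‖ ^ 2) * rexp ⟪(2 * a) • x, u⟫_ℝ) := by
  rw [gaussianBump, ← Real.exp_add, ← Real.exp_add, norm_sub_sq_real, real_inner_smul_left,
    real_inner_comm]
  ring_nf

def expInnerMonoidHom (y : V) : Multiplicative V →* ℝ :=
  Real.expMonoidHom.comp (innerₗ V y).toAddMonoidHom.toMultiplicative

lemma expInnerMonoidHom_apply (y : V) (u : Multiplicative V) :
    expInnerMonoidHom y u = rexp ⟪y, u.toAdd⟫_ℝ := rfl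

lemma expInnerMonoidHom_injective : Function.Injective (expInnerMonoidHom (V := V)) := by
  intro y z h
  have := congrArg (fun f => f (Multiplicative.ofAdd (y - z))) h
  simp only [expInnerMonoidHom_apply, Real.exp_eq_exp, toAdd_ofAdd] at this
  rw [← sub_eq_zero, ← inner_self_eq_zero (𝕜 := ℝ), inner_sub_left, this, sub_self]

theorem linearIndependent_gaussianBump {ι : Type*} [Fintype ι] {a : ℝ} (ha : a ≠ 0) {x : ι → V}
    (hx : Function.Injective x) : LinearIndependent ℝ fun i => gaussianBump a (x i) := by
  have hexp : LinearIndependent ℝ fun i => ⇑(expInnerMonoidHom ((2 * a) • x i)) :=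
    (linearIndependent_monoidHom _ ℝ).comp _ <|
      expInnerMonoidHom_injective.comp <| (smul_right_injective V (by simpa using ha)).comp hx
  rw [Fintype.linearIndependent_iff] at hexp ⊢
  intro c hc i
  have hc' : ∑ j, (c j * rexp (-a * ‖x j‖ ^ 2)) • ⇑(expInnerMonoidHom ((2 * a) • x j)) = 0 := by
    funext u
    have := congrFun hc u.toAdd
    simp only [Finset.sum_apply, Pi.smul_apply, smul_eq_mul, gaussianBump_eq_mul_exp_inner,
      Pi.zero_apply, expInnerMonoidHom_apply] at this ⊢
    refine (mul_eq_zero.mp ?_).resolve_left (Real.exp_ne_zero (-a * ‖u.toAdd‖ ^ 2))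
    rw [Finset.mul_sum, ← this]
    exact Finset.sum_congr rfl fun j _ => by ring
  simpa using hexp _ hc' i

section Integral

variable [FiniteDimensional ℝ V] [MeasurableSpace V] [BorelSpace V]

lemma integral_gaussianBump {a : ℝ} (ha : 0 < a) (x : V) :
    ∫ u, gaussianBump a x u = (π / a) ^ (Module.finrank ℝ V / 2 : ℝ) := by
  rw [← GaussianFourier.integral_rexp_neg_mul_sq_norm ha]
  exact integral_sub_right_eq_self (fun v => rexp (-a * ‖v‖ ^ 2)) x

lemma integrable_gaussianBump {a : ℝ} (ha : 0 < a) (x : V) : Integrable (gaussianBump a x) :=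
  Integrable.of_integral_ne_zero <| by rw [integral_gaussianBump ha]; positivity

variable {ι : Type*} [Fintype ι] {b : ℝ}

lemma integrable_gaussianBump_mul_gaussianBump (hb : 0 < b) (x y : V) :
    Integrable fun u => gaussianBump (2 * b) x u * gaussianBump (2 * b) y u := by
  simp_rw [gaussianBump_mul_gaussianBump]
  exact (integrable_gaussianBump (by positivity) _).const_mul _

lemma integrable_sq_sum_mul_gaussianBump (hb : 0 < b) (c : ι → ℝ) (x : ι → V) :
    Integrable fun u => (∑ i, c i * gaussianBump (2 * b) (x i) u) ^ 2 := by
  simp_rw [Finset.sq_sum_mul]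
  exact integrable_finsetSum _ fun i _ => integrable_finsetSum _ fun j _ =>
    (integrable_gaussianBump_mul_gaussianBump hb _ _).const_mul _

lemma integral_sq_sum_mul_gaussianBump (hb : 0 < b) (c : ι → ℝ) (x : ι → V) :
    ∫ u, (∑ i, c i * gaussianBump (2 * b) (x i) u) ^ 2 =
      (π / (4 * b)) ^ (Module.finrank ℝ V / 2 : ℝ) * (c ⬝ᵥ (gaussianGram b x *ᵥ c)) := by
  have hint (i j : ι) := (integrable_gaussianBump_mul_gaussianBump hb (x i) (x j)).const_mul
    (c i * c j)
  simp_rw [Finset.sq_sum_mul]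
  rw [integral_finsetSum _ fun i _ => integrable_finsetSum _ fun j _ => hint i j]
  simp only [dotProduct, Matrix.mulVec, gaussianGram, Matrix.of_apply, Finset.mul_sum]
  refine Finset.sum_congr rfl fun i _ => ?_
  rw [integral_finsetSum _ fun j _ => hint i j]
  refine Finset.sum_congr rfl fun j _ => ?_
  simp_rw [integral_const_mul, gaussianBump_mul_gaussianBump, integral_const_mul,
    integral_gaussianBump (by positivity : 0 < 4 * b)]
  ring

end Integral

theorem posDef_gaussianGram [FiniteDimensional ℝ V] {ι : Type*} [Fintype ι] {b : ℝ} (hb : 0 < b)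
    {x : ι → V} (hx : Function.Injective x) : (gaussianGram b x).PosDef := by
  let := borel V
  have : BorelSpace V := ⟨rfl⟩
  refine Matrix.posDef_iff_dotProduct_mulVec.mpr
    ⟨Matrix.isHermitian_iff_isSymm.mpr (gaussianGram_isSymm b x), fun c hc => ?_⟩
  obtain ⟨u, hu⟩ : ∃ u, ∑ i, c i * gaussianBump (2 * b) (x i) u ≠ 0 := by
    by_contra! h
    refine hc (funext <| Fintype.linearIndependent_iff.mp
      (linearIndependent_gaussianBump (a := 2 * b) (by positivity) hx) c (funext fun u => ?_))
    simpa using h u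
  have hpos := integral_pos_of_integrable_nonneg_nonzero (by fun_prop)
    (integrable_sq_sum_mul_gaussianBump hb c x) (fun u => sq_nonneg _) (pow_ne_zero 2 hu)
  rw [integral_sq_sum_mul_gaussianBump hb] at hpos
  simpa using pos_of_mul_pos_right hpos (by positivity)

end

end

theorem gaussian_gram_symm_posDef_general
    {d : ℕ} (σ : ℝ) (hσ : 0 < σ) (n : ℕ)
    (xc : Fin n → EuclideanSpace ℝ (Fin d)) (hxc : Function.Injective xc) :
    (Matrix.of fun i j : Fin n =>
        Real.exp (-‖xc i - xc j‖ ^ 2 / (2 * σ ^ 2))).IsSymm ∧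
    (Matrix.of fun i j : Fin n =>
        Real.exp (-‖xc i - xc j‖ ^ 2 / (2 * σ ^ 2))).PosDef := by
  have hK : (Matrix.of fun i j : Fin n => Real.exp (-‖xc i - xc j‖ ^ 2 / (2 * σ ^ 2))) =
      gaussianGram (2 * σ ^ 2)⁻¹ xc := by
    ext i j
    simp only [gaussianGram, Matrix.of_apply]
    congr 1
    ring
  rw [hK]
  exact ⟨gaussianGram_isSymm _ xc, posDef_gaussianGram (by positivity) hxc⟩

/-- For every `σ > 0`, every positive `n` and pairwise distinct points
`x₁,…,xₙ ∈ ℝ^d`, the Gram matrix of the Gaussian kernel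
`K(p,q) = exp(−‖p−q‖²/(2σ²))` is symmetric and positive definite. -/
theorem gaussian_gram_symm_posDef
    {d : ℕ} (σ : ℝ) (hσ : 0 < σ) (n : ℕ) (hn : 0 < n)
    (xc : Fin n → EuclideanSpace ℝ (Fin d)) (hxc : Function.Injective xc) :
    (Matrix.of fun i j : Fin n =>
        Real.exp (-‖xc i - xc j‖ ^ 2 / (2 * σ ^ 2))).IsSymm ∧
    (Matrix.of fun i j : Fin n =>
        Real.exp (-‖xc i - xc j‖ ^ 2 / (2 * σ ^ 2))).PosDef :=
  gaussian_gram_symm_posDef_general σ hσ n xc hxc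
end

section
/- Let T > 0, let x : [0,T] → Ω and x̃ : [0,T] → ℝ^d be continuous, and let α : [0,T] → ℝⁿ be a differentiable curve; set f̂ₙ(t) = Σ_{j=1}^{n} α_j(t) k_{x_j} ∈ Hₙ. Then f̂ₙ satisfies the projected learning law f̂ₙ'(t) = Πₙ Γ⁻¹ (B_N E_{x(t)})* P x̃(t) for all t ∈ [0,T] if and only if α satisfies the ordinary differential equation α'(t) = 𝕂⁻¹ Γ⁻¹ 𝒦(x_c, x(t)) (B_Nᵀ P x̃(t)), where 𝒦(x_c, x(t)) ∈ ℝⁿ is the vector with components k_{x_i}(x(t)), i = 1,…,n. -/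
open Set

/-- The orthogonal projection of `H` onto the finite-dimensional subspace
`Hₙ = span{k_{x₁},…,k_{xₙ}}` spanned by the representers of the kernel centers. -/
noncomputable def projHn {d n : ℕ} {H : Type} [NormedAddCommGroup H]
    [InnerProductSpace ℝ H]
    (k : EuclideanSpace ℝ (Fin d) → H) (xc : Fin n → EuclideanSpace ℝ (Fin d)) :
    H →L[ℝ] (Submodule.span ℝ (Set.range fun i => k (xc i))) :=
  haveI : FiniteDimensional ℝ (Submodule.span ℝ (Set.range fun i => k (xc i))) :=
    FiniteDimensional.span_of_finite ℝ (Set.finite_range _)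
  Submodule.orthogonalProjection _

/-!
The synthesis map `c ↦ ∑ⱼ cⱼ k_{xⱼ}` has the continuous left inverse `f ↦ 𝕂⁻¹ (⟪k_{xᵢ}, f⟫)ᵢ`
whenever the Gram matrix `𝕂` is invertible, and `Πₙ` is synthesis after analysis. So both sides
of the learning law are images under the synthesis map, derivatives pass through it in both
directions, and the reproducing property turns `⟪k_{xᵢ}, k_{x(t)}⟫` into `k_{xᵢ}(x(t))`.
-/

open Matrix

section Gram

variable {ι E : Type*} [Fintype ι] [NormedAddCommGroup E] [InnerProductSpace ℝ E]
  (v : ι → E)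

noncomputable def gramSynthesis : (ι → ℝ) →L[ℝ] E :=
  (Fintype.linearCombination ℝ v).toContinuousLinearMap

noncomputable def gramAnalysis [DecidableEq ι] : E →L[ℝ] (ι → ℝ) :=
  (Matrix.toLin' (gram ℝ v)⁻¹).toContinuousLinearMap ∘L
    ContinuousLinearMap.pi fun i => innerSL ℝ (v i)

theorem gramSynthesis_apply (c : ι → ℝ) : gramSynthesis v c = ∑ j, c j • v j := rfl

theorem gramAnalysis_apply [DecidableEq ι] (u : E) :
    gramAnalysis v u = (gram ℝ v)⁻¹ *ᵥ fun i => inner ℝ (v i) u := rfl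

theorem inner_gramSynthesis (c : ι → ℝ) (i : ι) :
    inner ℝ (v i) (gramSynthesis v c) = (gram ℝ v *ᵥ c) i := by
  simp [gramSynthesis_apply, inner_sum, real_inner_smul_right, mulVec, dotProduct, gram, mul_comm]

theorem gramAnalysis_gramSynthesis [DecidableEq ι] (hv : IsUnit (gram ℝ v).det) (c : ι → ℝ) :
    gramAnalysis v (gramSynthesis v c) = c := by
  have hinner : (fun i => inner ℝ (v i) (gramSynthesis v c)) = gram ℝ v *ᵥ c :=
    funext (inner_gramSynthesis v c)
  rw [gramAnalysis_apply, hinner, mulVec_mulVec, nonsing_inv_mul _ hv, one_mulVec]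

theorem starProjection_span_range_eq_gramSynthesis_gramAnalysis [DecidableEq ι]
    [(Submodule.span ℝ (range v)).HasOrthogonalProjection] (hv : IsUnit (gram ℝ v).det)
    (u : E) :
    (Submodule.span ℝ (range v)).starProjection u = gramSynthesis v (gramAnalysis v u) := by
  apply Submodule.eq_starProjection_of_mem_of_inner_eq_zero
  · rw [gramSynthesis_apply]
    exact Submodule.sum_mem _ fun j _ => Submodule.smul_mem _ _ (Submodule.subset_span ⟨j, rfl⟩)
  · intro w hw
    induction hw using Submodule.span_induction with
    | mem w hw =>
      obtain ⟨i, rfl⟩ := hw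
      rw [inner_sub_left, real_inner_comm, real_inner_comm (v i), inner_gramSynthesis,
        gramAnalysis_apply, mulVec_mulVec, mul_nonsing_inv _ hv, one_mulVec, sub_self]
    | zero => exact inner_zero_right _
    | add w₁ w₂ _ _ h₁ h₂ => rw [inner_add_right, h₁, h₂, add_zero]
    | smul a w _ h => rw [real_inner_smul_right, h, mul_zero]

end Gram

theorem hasDerivWithinAt_comp_iff_of_leftInverse {F G : Type*}
    [NormedAddCommGroup F] [NormedSpace ℝ F] [NormedAddCommGroup G] [NormedSpace ℝ G]
    {L : F →L[ℝ] G} {A : G →L[ℝ] F} (hAL : ∀ c, A (L c) = c)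
    {α : ℝ → F} {c : F} {s : Set ℝ} {t : ℝ} :
    HasDerivWithinAt (L ∘ α) (L c) s t ↔ HasDerivWithinAt α c s t := by
  refine ⟨fun h => ?_, fun h => L.hasFDerivAt.comp_hasDerivWithinAt t h⟩
  have := A.hasFDerivAt.comp_hasDerivWithinAt t h
  simpa [Function.comp_def, hAL] using this

theorem learning_law_iff_coefficient_ode_general
    {d n : ℕ} (Ω : Set (EuclideanSpace ℝ (Fin d)))
    {H : Type} [NormedAddCommGroup H] [InnerProductSpace ℝ H]
    (ι : H →ₗ[ℝ] (EuclideanSpace ℝ (Fin d) → ℝ))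
    (k : EuclideanSpace ℝ (Fin d) → H)
    (hk : ∀ ω ∈ Ω, ∀ f : H, (inner ℝ (k ω) f : ℝ) = ι f ω)
    (B_N : EuclideanSpace ℝ (Fin d)) (P : Matrix (Fin d) (Fin d) ℝ)
    (Γ : ℝ)
    (xc : Fin n → EuclideanSpace ℝ (Fin d))
    (hGram : IsUnit (Matrix.of fun i j : Fin n =>
      (inner ℝ (k (xc i)) (k (xc j)) : ℝ)).det)
    (T : ℝ)
    (x : ℝ → EuclideanSpace ℝ (Fin d))
    (hxΩ : ∀ t ∈ Icc (0 : ℝ) T, x t ∈ Ω)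
    (xerr : ℝ → EuclideanSpace ℝ (Fin d))
    (α : ℝ → (Fin n → ℝ)) :
    (∀ t ∈ Icc (0 : ℝ) T,
      HasDerivWithinAt (fun s => ∑ j, α s j • k (xc j))
        ((projHn k xc
          (Γ⁻¹ • ((inner ℝ B_N ((Matrix.toEuclideanLin P) (xerr t)) : ℝ) • k (x t))) : H))
        (Icc 0 T) t) ↔
    (∀ t ∈ Icc (0 : ℝ) T,
      HasDerivWithinAt α
        ((Matrix.of fun i j : Fin n => (inner ℝ (k (xc i)) (k (xc j)) : ℝ))⁻¹.mulVec
          (fun i => Γ⁻¹ * (ι (k (xc i)) (x t)) *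
            (inner ℝ B_N ((Matrix.toEuclideanLin P) (xerr t)) : ℝ)))
        (Icc 0 T) t) := by
  set v := fun i => k (xc i)
  refine forall₂_congr fun t ht => ?_
  have hkernel : ∀ i, inner ℝ (v i) (k (x t)) = ι (k (xc i)) (x t) := fun i => by
    rw [real_inner_comm, hk _ (hxΩ t ht)]
  have : FiniteDimensional ℝ (Submodule.span ℝ (range v)) :=
    FiniteDimensional.span_of_finite ℝ (finite_range _)
  have hcoeff : gramAnalysis v (Γ⁻¹ • (inner ℝ B_N (toEuclideanLin P (xerr t)) • k (x t))) =
      (gram ℝ v)⁻¹ *ᵥ fun i =>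
        Γ⁻¹ * ι (k (xc i)) (x t) * inner ℝ B_N (toEuclideanLin P (xerr t)) := by
    simp only [gramAnalysis_apply, real_inner_smul_right, hkernel, mul_assoc, mul_comm (ι _ _)]
  -- `projHn` is `orthogonalProjection`, whose coercion is `starProjection` by definition.
  change HasDerivWithinAt (gramSynthesis v ∘ α)
    ((Submodule.span ℝ (range v)).starProjection _) _ _ ↔ _
  rw [starProjection_span_range_eq_gramSynthesis_gramAnalysis v hGram, hcoeff]
  exact hasDerivWithinAt_comp_iff_of_leftInverse (gramAnalysis_gramSynthesis v hGram)

/-- with `f̂ₙ(t) = Σⱼ αⱼ(t) k_{xⱼ}`, the projected learning law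
`f̂ₙ'(t) = Πₙ Γ⁻¹ (B_N E_{x(t)})* P x̃(t)` holds on `[0,T]` if and only if the
coefficient vector satisfies the ODE `α'(t) = 𝕂⁻¹ Γ⁻¹ 𝒦(x_c,x(t)) (B_Nᵀ P x̃(t))`. -/
theorem learning_law_iff_coefficient_ode
    {d n : ℕ} (Ω : Set (EuclideanSpace ℝ (Fin d)))
    {H : Type} [NormedAddCommGroup H] [InnerProductSpace ℝ H] [CompleteSpace H]
    (ι : H →ₗ[ℝ] (EuclideanSpace ℝ (Fin d) → ℝ))
    (C : ℝ) (hC : 0 < C)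
    (hbound : ∀ f : H, ∀ ω ∈ Ω, |ι f ω| ≤ C * ‖f‖)
    (k : EuclideanSpace ℝ (Fin d) → H)
    (hk : ∀ ω ∈ Ω, ∀ f : H, (inner ℝ (k ω) f : ℝ) = ι f ω)
    (B_N : EuclideanSpace ℝ (Fin d)) (P : Matrix (Fin d) (Fin d) ℝ)
    (Γ : ℝ) (hΓ : 0 < Γ)
    (xc : Fin n → EuclideanSpace ℝ (Fin d)) (hxcΩ : ∀ i, xc i ∈ Ω)
    (hGram : IsUnit (Matrix.of fun i j : Fin n =>
      (inner ℝ (k (xc i)) (k (xc j)) : ℝ)).det)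
    (T : ℝ) (hT : 0 < T)
    (x : ℝ → EuclideanSpace ℝ (Fin d)) (hx : ContinuousOn x (Icc 0 T))
    (hxΩ : ∀ t ∈ Icc (0 : ℝ) T, x t ∈ Ω)
    (xerr : ℝ → EuclideanSpace ℝ (Fin d)) (hxerr : ContinuousOn xerr (Icc 0 T))
    (α : ℝ → (Fin n → ℝ))
    (hα : ∀ t ∈ Icc (0 : ℝ) T, DifferentiableWithinAt ℝ α (Icc 0 T) t) :
    (∀ t ∈ Icc (0 : ℝ) T,
      HasDerivWithinAt (fun s => ∑ j, α s j • k (xc j))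
        ((projHn k xc
          (Γ⁻¹ • ((inner ℝ B_N ((Matrix.toEuclideanLin P) (xerr t)) : ℝ) • k (x t))) : H))
        (Icc 0 T) t) ↔
    (∀ t ∈ Icc (0 : ℝ) T,
      HasDerivWithinAt α
        ((Matrix.of fun i j : Fin n => (inner ℝ (k (xc i)) (k (xc j)) : ℝ))⁻¹.mulVec
          (fun i => Γ⁻¹ * (ι (k (xc i)) (x t)) *
            (inner ℝ B_N ((Matrix.toEuclideanLin P) (xerr t)) : ℝ)))
        (Icc 0 T) t) :=
  learning_law_iff_coefficient_ode_general Ω ι k hk B_N P Γ xc hGram T x hxΩ xerr α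
end
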